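/- With V as above, V maps the canonical purification of σ_A to the canonical purification of σ_AB: V (σ_A^{1/2} ⊗ I_Â)|Γ⟩_{AÂ} = (σ_AB^{1/2} ⊗ I_{ÂB̂})|Γ⟩_{ABÂB̂}. -/

import Mathlib

open Matrix MeasureTheory
open scoped Kronecker ComplexOrder

open scoped Classical
noncomputable section

variable {n : Type*} [Fintype n] [DecidableEq n]

/-- positive semidefinite square root (total; junk value `0` off PSD matrices) -/
def msqrt (A : Matrix n n ℂ) : Matrix n n ℂ :=
  if h : A.PosSemidef then
    (h.1.eigenvectorUnitary : Matrix n n ℂ) *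
      Matrix.diagonal (fun i => ((Real.sqrt (h.1.eigenvalues i) : ℝ) : ℂ)) *
      (star h.1.eigenvectorUnitary : Matrix n n ℂ)
  else 0

/-- trace norm -/
def traceNorm (A : Matrix n n ℂ) : ℝ :=
  ((msqrt (Aᴴ * A)).trace).re

/-- Hilbert–Schmidt norm -/
def hsNorm (A : Matrix n n ℂ) : ℝ :=
  Real.sqrt ((Aᴴ * A).trace).re

/-- apply a scalar function via functional calculus (total) -/
def matFun (f : ℝ → ℝ) (A : Matrix n n ℂ) : Matrix n n ℂ :=
  if h : A.IsHermitian then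
    (h.eigenvectorUnitary : Matrix n n ℂ) *
      Matrix.diagonal (fun i => (f (h.eigenvalues i) : ℂ)) *
      (h.eigenvectorUnitary : Matrix n n ℂ)ᴴ
  else 0

def minEig (A : Matrix n n ℂ) : ℝ :=
  if h : A.IsHermitian then ⨅ i, h.eigenvalues i else 0

def minPosEig (A : Matrix n n ℂ) : ℝ :=
  if h : A.IsHermitian then sInf {x : ℝ | x ≠ 0 ∧ ∃ i, h.eigenvalues i = x} else 0

def opNorm {m : Type*} [Fintype m] (A : Matrix m n ℂ) : ℝ :=
  ‖LinearMap.toContinuousLinearMap (Matrix.toEuclideanLin A)‖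

variable {a b : Type*} [Fintype a] [DecidableEq a] [Fintype b] [DecidableEq b]

/-- partial trace over the second tensor factor -/
def ptraceB (M : Matrix (a × b) (a × b) ℂ) : Matrix a a ℂ :=
  Matrix.of fun i j => ∑ k : b, M (i, k) (j, k)

/-- Petz recovery map for `σ` and the partial trace over `B` -/
def petz (σ : Matrix (a × b) (a × b) ℂ) (X : Matrix a a ℂ) : Matrix (a × b) (a × b) ℂ :=
  msqrt σ * (((msqrt (ptraceB σ))⁻¹ * X * (msqrt (ptraceB σ))⁻¹) ⊗ₖ (1 : Matrix b b ℂ)) *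
    msqrt σ

/-- isometric extension of the Petz recovery channel -/
def petzV (σ : Matrix (a × b) (a × b) ℂ) : Matrix ((a × b) × (a × b)) (a × a) ℂ :=
  (msqrt σ ⊗ₖ (1 : Matrix (a × b) (a × b) ℂ)) *
    Matrix.of (fun p q =>
      (msqrt (ptraceB σ))⁻¹ p.1.1 q.1 *
        (if p.2.1 = q.2 ∧ p.1.2 = p.2.2 then 1 else 0))

/-- canonical purification of `σ`, as a vector indexed by `n × n` -/
def purif (σ : Matrix n n ℂ) : n × n → ℂ :=
  fun p => msqrt σ p.1 p.2

/-- Petz quasi-relative entropy `Q_f(ρ‖σ)` -/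
def Qf (f : ℝ → ℝ) (ρ σ : Matrix n n ℂ) : ℝ :=
  (dotProduct (star (purif σ)) ((matFun f (σ⁻¹ ⊗ₖ ρᵀ)) *ᵥ purif σ)).re

/-- operator convexity of `f` on `[0,∞)` (Loewner order stated via `PosSemidef` differences) -/
def OpConvexOn (f : ℝ → ℝ) : Prop :=
  ∀ (k : ℕ) (A B : Matrix (Fin k) (Fin k) ℂ), A.PosSemidef → B.PosSemidef →
    ∀ lam : ℝ, 0 ≤ lam → lam ≤ 1 →
      (((lam : ℂ) • matFun f A + ((1 - lam : ℝ) : ℂ) • matFun f B)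
        - matFun f ((lam : ℂ) • A + ((1 - lam : ℝ) : ℂ) • B)).PosSemidef

end

open Classical
variable {n : Type*} [Fintype n] [DecidableEq n]
variable {a b : Type*} [Fintype a] [DecidableEq a] [Fintype b] [DecidableEq b]

/-!
Write the canonical purification of `M` as `vec Mᵀ`. The embedding `σ_A^{-1/2} ⊗ |Γ⟩_{BB̂}` sends
`vec (σ_A^{1/2})ᵀ` to `vec (σ_A^{-1/2} σ_A^{1/2} ⊗ I_B)ᵀ`, which is the maximally entangled vector
`|Γ⟩` on `AB ⊗ ÂB̂` because `σ_A` is positive definite (`B` is nonempty, otherwise there is nothing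
to prove). Finally `σ_AB^{1/2} ⊗ I` maps `|Γ⟩ = vec 1` to `vec (σ_AB^{1/2})ᵀ`.
-/

theorem purif_eq_vec (M : Matrix n n ℂ) : purif M = vec (msqrt M)ᵀ := rfl

theorem msqrt_mul_self {A : Matrix n n ℂ} (hA : A.PosSemidef) : msqrt A * msqrt A = A := by
  set U : Matrix n n ℂ := (hA.1.eigenvectorUnitary : Matrix n n ℂ)
  set D : Matrix n n ℂ := diagonal fun i => ((√(hA.1.eigenvalues i) : ℝ) : ℂ)
  have hD : D * D = diagonal (RCLike.ofReal ∘ hA.1.eigenvalues) := by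
    rw [diagonal_mul_diagonal]
    congr 1 with i
    rw [Function.comp_apply, ← Complex.ofReal_mul, Real.mul_self_sqrt (hA.eigenvalues_nonneg i)]
    rfl
  have hU : star U * U = 1 := Unitary.coe_star_mul_self _
  calc msqrt A * msqrt A = U * D * (star U * U) * D * star U := by
        simp only [msqrt, dif_pos hA, U, D, mul_assoc]
    _ = A := by
        rw [hU, Matrix.mul_one, mul_assoc U, hD]
        conv_rhs => rw [hA.1.spectral_theorem, Unitary.conjStarAlgAut_apply]

theorem isUnit_det_msqrt {A : Matrix n n ℂ} (hA : A.PosDef) : IsUnit (msqrt A).det := by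
  have h : IsUnit (msqrt A * msqrt A) := (msqrt_mul_self hA.posSemidef).symm ▸ hA.isUnit
  exact (isUnit_iff_isUnit_det _).mp (isUnit_of_mul_isUnit_left h)

theorem ptraceB_eq_sum_submatrix {a b : Type*} [Fintype b] (M : Matrix (a × b) (a × b) ℂ) :
    ptraceB M = ∑ k, M.submatrix (·, k) (·, k) := by
  ext i j
  simp [ptraceB, Matrix.sum_apply]

theorem Matrix.PosDef.ptraceB {a b : Type*} [Fintype b] [Nonempty b]
    {σ : Matrix (a × b) (a × b) ℂ} (hσ : σ.PosDef) : (ptraceB σ).PosDef := by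
  rw [ptraceB_eq_sum_submatrix]
  exact posDef_sum Finset.univ_nonempty fun k _ =>
    hσ.submatrix fun i j h => (Prod.mk.inj h).1

/-- `(T ⊗ I_Â) ⊗ |Γ⟩_{BB̂}`, with rows indexed by `(A × B) × (Â × B̂)` and columns by `A × Â`. -/
def kroneckerMaxEnt {R : Type*} [MulZeroOneClass R] (T : Matrix a a R) :
    Matrix ((a × b) × (a × b)) (a × a) R :=
  of fun p q => T p.1.1 q.1 * (if p.2.1 = q.2 ∧ p.1.2 = p.2.2 then 1 else 0)

theorem kroneckerMaxEnt_mulVec_vec {a b : Type*} [Fintype a] [DecidableEq a] [DecidableEq b]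
    {R : Type*} [CommSemiring R] (T S : Matrix a a R) :
    kroneckerMaxEnt (b := b) T *ᵥ vec Sᵀ = vec ((T * S) ⊗ₖ (1 : Matrix b b R))ᵀ := by
  ext ⟨⟨i, k⟩, ⟨j, l⟩⟩
  simp [kroneckerMaxEnt, mulVec, dotProduct, Fintype.sum_prod_type, mul_apply, one_apply, ite_and]

-- The product in `petzV` elaborates through the `CStarMatrix` instance; `rfl` unfolds it.
theorem petzV_mulVec (σ : Matrix (a × b) (a × b) ℂ) (v : a × a → ℂ) :
    petzV σ *ᵥ v = (msqrt σ ⊗ₖ 1) *ᵥ kroneckerMaxEnt (msqrt (ptraceB σ))⁻¹ *ᵥ v := by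
  rw [mulVec_mulVec]
  rfl

/-- `V` maps the canonical purification of `σ_A` to the canonical purification of `σ_AB`. -/
theorem petzV_purif (σ : Matrix (a × b) (a × b) ℂ) (hσ : σ.PosDef) :
    petzV σ *ᵥ purif (ptraceB σ) = purif σ := by
  cases isEmpty_or_nonempty b
  · exact funext fun p => isEmptyElim p.1.2
  have hinv : (msqrt (ptraceB σ))⁻¹ * msqrt (ptraceB σ) = 1 :=
    nonsing_inv_mul _ (isUnit_det_msqrt hσ.ptraceB)
  rw [purif_eq_vec, purif_eq_vec, petzV_mulVec, kroneckerMaxEnt_mulVec_vec, hinv,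
    one_kronecker_one, kronecker_mulVec_vec, transpose_one, Matrix.mul_one, Matrix.one_mul]
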